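/- arXiv:1408.3467 — 6 statements merged into one kernel-verified Lean document; each statement's English description precedes it below -/
import Mathlib

section
/- For any x, y ∈ ℝ and λ > 0, the Huber loss satisfies the pointwise identity ρ_λ(x) = min over γ ∈ ℝ of ( (x - γ)²/2 + λ|γ| ), and the minimum is attained at γ = soft-threshold of x: γ = sign(x)·max(|x| - λ, 0). -/
/-- The Huber loss with parameter `lam`. -/
noncomputable def huber (lam x : ℝ) : ℝ :=
  if |x| ≤ lam then x ^ 2 / 2 else lam * |x| - lam ^ 2 / 2

/-- Soft-thresholding (shrinkage) operator. -/
noncomputable def shrink (lam x : ℝ) : ℝ := Real.sign x * max (|x| - lam) 0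

theorem huber_eq_min_of_quadratic_plus_l1 (lam : ℝ) (hlam : 0 < lam) (x : ℝ) :
    (∀ γ : ℝ, huber lam x ≤ (x - γ) ^ 2 / 2 + lam * |γ|) ∧
      huber lam x = (x - shrink lam x) ^ 2 / 2 + lam * |shrink lam x| := by
  by_cases h : |x| ≤ lam
  · have hs : shrink lam x = 0 := by
      unfold shrink
      have : max (|x| - lam) 0 = 0 := max_eq_right (by linarith)
      rw [this, mul_zero]
    constructor
    · intro γ
      rw [huber, if_pos h]
      nlinarith [le_abs_self (x * γ), abs_mul x γ, sq_nonneg γ,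
        mul_le_mul_of_nonneg_right h (abs_nonneg γ)]
    · rw [huber, if_pos h, hs]
      simp
  · push_neg at h
    have hx0 : x ≠ 0 := by
      intro hx; rw [hx, abs_zero] at h; linarith
    have hmax : max (|x| - lam) 0 = |x| - lam := max_eq_left (by linarith)
    have hs : |shrink lam x| = |x| - lam := by
      unfold shrink
      rw [hmax, abs_mul]
      rcases hx0.lt_or_gt with hx | hx
      · rw [Real.sign_of_neg hx]
        rw [abs_of_nonneg (by linarith : (0:ℝ) ≤ |x| - lam)]
        simp
      · rw [Real.sign_of_pos hx]
        rw [abs_of_nonneg (by linarith : (0:ℝ) ≤ |x| - lam)]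
        simp
    constructor
    · intro γ
      rw [huber, if_neg (not_le.mpr h)]
      have h1 : |(|x| - |γ|)| ≤ |x - γ| := abs_abs_sub_abs_le_abs_sub x γ
      have h2 : (|x| - |γ|) ^ 2 ≤ (x - γ) ^ 2 := by
        rw [← sq_abs (x - γ), ← sq_abs (|x| - |γ|)]
        exact pow_le_pow_left₀ (abs_nonneg _) h1 2
      nlinarith [sq_nonneg (|x| - |γ| - lam)]
    · rw [huber, if_neg (not_le.mpr h), hs]
      have hxm : x - shrink lam x = Real.sign x * lam := by
        unfold shrink
        rw [hmax]
        rcases hx0.lt_or_gt with hx | hx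
        · rw [Real.sign_of_neg hx, abs_of_neg hx]; ring
        · rw [Real.sign_of_pos hx, abs_of_pos hx]; ring
      rw [hxm]
      rcases hx0.lt_or_gt with hx | hx
      · rw [Real.sign_of_neg hx]; ring
      · rw [Real.sign_of_pos hx]; ring
end

section
/- For fixed λ > 0, a pair (θ̂, γ̂) minimizes the Huber-LASSO objective F(θ, γ) = (1/2)‖Y - Xθ - γ‖₂² + λ‖γ‖₁ over θ ∈ ℝⁿ, γ ∈ ℝᵐ if and only if θ̂ minimizes the Huber regression objective Σᵢ ρ_λ((Y - Xθ)ᵢ) and γ̂ᵢ = shrink_λ((Y - Xθ̂)ᵢ) for each i. -/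
lemma shrink_cases (lam r : ℝ) (hlam : 0 < lam) :
    (|r| ≤ lam ∧ shrink lam r = 0) ∨ (lam < r ∧ shrink lam r = r - lam)
      ∨ (r < -lam ∧ shrink lam r = r + lam) := by
  rcases le_or_gt (|r|) lam with h | h
  · left
    have hm : max (|r| - lam) 0 = 0 := max_eq_right (by linarith)
    exact ⟨h, by simp [shrink, hm]⟩
  · right
    rcases lt_abs.mp h with h1 | h1
    · left
      refine ⟨h1, ?_⟩
      have : Real.sign r = 1 := Real.sign_of_pos (by linarith)
      rw [shrink, this, abs_of_pos (by linarith), max_eq_left (by linarith)]; ring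
    · right
      refine ⟨by linarith, ?_⟩
      have : Real.sign r = -1 := Real.sign_of_neg (by linarith)
      rw [shrink, this, abs_of_neg (by linarith), max_eq_left (by linarith)]; ring

lemma huber_eq (lam r : ℝ) (hlam : 0 < lam) :
    (r - shrink lam r)^2 / 2 + lam * |shrink lam r| = huber lam r := by
  rcases shrink_cases lam r hlam with ⟨h, hs⟩ | ⟨h, hs⟩ | ⟨h, hs⟩ <;> rw [hs, huber]
  · rw [if_pos h]; simp
  · rw [if_neg (by rw [abs_of_pos (by linarith)]; push_neg; linarith),
      abs_of_nonneg (by linarith), abs_of_pos (by linarith)]; ring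
  · rw [if_neg (by rw [abs_of_neg (by linarith)]; push_neg; linarith),
      abs_of_neg (by linarith), abs_of_neg (by linarith)]; ring

lemma huber_key (lam r γ : ℝ) (hlam : 0 < lam) :
    huber lam r + (γ - shrink lam r)^2 / 2 ≤ (r - γ)^2 / 2 + lam * |γ| := by
  rcases shrink_cases lam r hlam with ⟨h, hs⟩ | ⟨h, hs⟩ | ⟨h, hs⟩
  · rw [hs, huber, if_pos h]
    rcases abs_cases γ with ⟨hg, hg2⟩ | ⟨hg, hg2⟩ <;>
      rcases abs_cases r with ⟨hr, hr2⟩ | ⟨hr, hr2⟩ <;> rw [hg] <;> nlinarith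
  · rw [hs, huber, if_neg (by rw [abs_of_pos (by linarith)]; push_neg; linarith),
      abs_of_pos (by linarith : (0:ℝ) < r)]
    rcases abs_cases γ with ⟨hg, hg2⟩ | ⟨hg, hg2⟩ <;> rw [hg] <;> nlinarith
  · rw [hs, huber, if_neg (by rw [abs_of_neg (by linarith)]; push_neg; linarith),
      abs_of_neg (by linarith : r < 0)]
    rcases abs_cases γ with ⟨hg, hg2⟩ | ⟨hg, hg2⟩ <;> rw [hg] <;> nlinarith

open Finset

theorem huberLasso_equiv_huberRegression
    {m n : ℕ} (X : Matrix (Fin m) (Fin n) ℝ) (Y : Fin m → ℝ)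
    (lam : ℝ) (hlam : 0 < lam)
    (F : (Fin n → ℝ) → (Fin m → ℝ) → ℝ)
    (hF : ∀ θ γ, F θ γ =
      (1 / 2) * ∑ i, (Y i - X.mulVec θ i - γ i) ^ 2 + lam * ∑ i, |γ i|)
    (H : (Fin n → ℝ) → ℝ)
    (hH : ∀ θ, H θ = ∑ i, huber lam (Y i - X.mulVec θ i))
    (θhat : Fin n → ℝ) (γhat : Fin m → ℝ) :
    (∀ θ γ, F θhat γhat ≤ F θ γ) ↔
      ((∀ θ, H θhat ≤ H θ) ∧
        ∀ i, γhat i = shrink lam (Y i - X.mulVec θhat i)) := by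
  -- F θ γ rewritten as a single sum
  have hF' : ∀ θ γ, F θ γ = ∑ i, ((Y i - X.mulVec θ i - γ i) ^ 2 / 2 + lam * |γ i|) := by
    intro θ γ
    rw [hF, Finset.mul_sum, Finset.mul_sum, ← Finset.sum_add_distrib]
    congr 1; funext i; ring
  have hEq : ∀ θ, F θ (fun i => shrink lam (Y i - X.mulVec θ i)) = H θ := by
    intro θ
    rw [hF', hH]
    refine Finset.sum_congr rfl fun i _ => ?_
    have := huber_eq lam (Y i - X.mulVec θ i) hlam
    linarith [this]
  have hGe : ∀ θ γ, H θ + ∑ i, (γ i - shrink lam (Y i - X.mulVec θ i)) ^ 2 / 2 ≤ F θ γ := by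
    intro θ γ
    rw [hF', hH, ← Finset.sum_add_distrib]
    exact Finset.sum_le_sum fun i _ => huber_key lam (Y i - X.mulVec θ i) (γ i) hlam
  constructor
  · intro h
    have h1 : F θhat γhat ≤ H θhat := by
      rw [← hEq θhat]; exact h _ _
    have h2 := hGe θhat γhat
    have h3 : ∑ i, (γhat i - shrink lam (Y i - X.mulVec θhat i)) ^ 2 / 2 ≤ 0 := by linarith
    have h4 : ∀ i ∈ Finset.univ, (γhat i - shrink lam (Y i - X.mulVec θhat i)) ^ 2 / 2 = 0 := by
      refine (Finset.sum_eq_zero_iff_of_nonneg fun i _ => by positivity).mp (le_antisymm h3 ?_)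
      exact Finset.sum_nonneg fun i _ => by positivity
    refine ⟨fun θ => ?_, fun i => ?_⟩
    · calc H θhat ≤ F θhat γhat := le_trans (le_add_of_nonneg_right
              (Finset.sum_nonneg fun i _ => by positivity)) (hGe θhat γhat)
        _ ≤ F θ (fun i => shrink lam (Y i - X.mulVec θ i)) := h _ _
        _ = H θ := hEq θ
    · have := h4 i (Finset.mem_univ i)
      have := pow_eq_zero_iff (n := 2) (by norm_num) |>.mp (by linarith : (γhat i - shrink lam (Y i - X.mulVec θhat i)) ^ 2 = 0)
      linarith
  · rintro ⟨hmin, hγ⟩ θ γ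
    have : γhat = fun i => shrink lam (Y i - X.mulVec θhat i) := funext hγ
    rw [this, hEq θhat]
    calc H θhat ≤ H θ := hmin θ
      _ ≤ F θ γ := le_trans (le_add_of_nonneg_right
            (Finset.sum_nonneg fun i _ => by positivity)) (hGe θ γ)
end

section
/- Let X ∈ ℝ^{m×n} and let U₂ have orthonormal columns spanning ker(Xᵀ). Then (θ̂, γ̂) minimizes (1/2)‖Y - Xθ - γ‖₂² + λ‖γ‖₁ if and only if γ̂ minimizes (1/2)‖U₂ᵀY - U₂ᵀγ‖₂² + λ‖γ‖₁ and θ̂ minimizes ‖X θ - P₁(Y - γ̂)‖₂², where P₁ is the orthogonal projection onto col(X). -/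
open Matrix Finset

private lemma sum_sq_eq_dot {N : ℕ} (v : Fin N → ℝ) : ∑ i, v i ^ 2 = v ⬝ᵥ v := by
  simp [dotProduct, sq]

private lemma aux_XD {m n : ℕ} (X : Matrix (Fin m) (Fin n) ℝ)
    (D : Matrix (Fin n) (Fin n) ℝ)
    (hAD : Xᵀ * X * D = Xᵀ * X) : X * D = X := by
  have h0 : Xᵀ * X * (D - 1) = 0 := by
    rw [mul_sub, mul_one, hAD, sub_self]
  have hMM : (X * (D - 1))ᵀ * (X * (D - 1)) = 0 := by
    calc (X * (D - 1))ᵀ * (X * (D - 1))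
        = (D - 1)ᵀ * (Xᵀ * X * (D - 1)) := by
          simp only [Matrix.transpose_mul, Matrix.mul_assoc]
      _ = 0 := by rw [h0, mul_zero]
  have hM : X * (D - 1) = 0 := by
    rw [← conjTranspose_eq_transpose_of_trivial] at hMM
    exact Matrix.conjTranspose_mul_self_eq_zero.mp hMM
  have hM' : X * D - X = 0 := by rwa [Matrix.mul_sub, Matrix.mul_one] at hM
  exact sub_eq_zero.mp hM'

theorem huberLasso_split
    {m n k : ℕ} (X : Matrix (Fin m) (Fin n) ℝ) (Y : Fin m → ℝ)
    (lam : ℝ) (hlam : 0 < lam)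
    (U₂ : Matrix (Fin m) (Fin k) ℝ)
    -- `U₂` has orthonormal columns
    (hU₂ : U₂ᵀ * U₂ = 1)
    -- the columns of `U₂` span `ker (Xᵀ)`
    (hker : ∀ v : Fin m → ℝ, Xᵀ.mulVec v = 0 ↔ ∃ c : Fin k → ℝ, v = U₂.mulVec c)
    -- `B` is the Moore–Penrose pseudoinverse of `XᵀX`
    (B : Matrix (Fin n) (Fin n) ℝ)
    (h1 : Xᵀ * X * B * (Xᵀ * X) = Xᵀ * X)
    (h2 : B * (Xᵀ * X) * B = B)
    (h3 : (Xᵀ * X * B)ᵀ = Xᵀ * X * B)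
    (h4 : (B * (Xᵀ * X))ᵀ = B * (Xᵀ * X))
    -- `P₁ = X (XᵀX)† Xᵀ` is the orthogonal projection onto `col X`
    (P₁ : Matrix (Fin m) (Fin m) ℝ) (hP₁ : P₁ = X * B * Xᵀ)
    (F : (Fin n → ℝ) → (Fin m → ℝ) → ℝ)
    (hF : ∀ θ γ, F θ γ =
      (1 / 2) * ∑ i, (Y i - X.mulVec θ i - γ i) ^ 2 + lam * ∑ i, |γ i|)
    (g : (Fin m → ℝ) → ℝ)
    (hg : ∀ γ, g γ =
      (1 / 2) * ∑ j, (U₂ᵀ.mulVec Y j - U₂ᵀ.mulVec γ j) ^ 2 + lam * ∑ i, |γ i|)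
    (θhat : Fin n → ℝ) (γhat : Fin m → ℝ) :
    (∀ θ γ, F θhat γhat ≤ F θ γ) ↔
      ((∀ γ, g γhat ≤ g γ) ∧
        ∀ θ : Fin n → ℝ,
          ∑ i, (X.mulVec θhat i - P₁.mulVec (Y - γhat) i) ^ 2 ≤
            ∑ i, (X.mulVec θ i - P₁.mulVec (Y - γhat) i) ^ 2) := by
  -- matrix identities
  have hPX : P₁ * X = X := by
    have hh := aux_XD X (B * (Xᵀ * X))
      (by rw [← Matrix.mul_assoc]; exact h1)
    rw [hP₁]
    calc X * B * Xᵀ * X = X * (B * (Xᵀ * X)) := by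
          simp only [Matrix.mul_assoc]
      _ = X := hh
  have hXtP : Xᵀ * P₁ = Xᵀ := by
    have h1t : Xᵀ * X * Bᵀ * (Xᵀ * X) = Xᵀ * X := by
      have := congrArg transpose h1
      simpa only [Matrix.transpose_mul, Matrix.transpose_transpose,
        Matrix.mul_assoc] using this
    have hh := aux_XD X (Bᵀ * (Xᵀ * X))
      (by rw [← Matrix.mul_assoc]; exact h1t)
    have h5 : X * Bᵀ * (Xᵀ * X) = X := by
      rw [Matrix.mul_assoc]; exact hh
    rw [hP₁]
    calc Xᵀ * (X * B * Xᵀ) = (X * Bᵀ * (Xᵀ * X))ᵀ := by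
          simp only [Matrix.transpose_mul, Matrix.transpose_transpose,
            Matrix.mul_assoc]
      _ = Xᵀ := by rw [h5]
  have hXU : Xᵀ * U₂ = 0 := by
    ext i j
    have h := congrFun ((hker (U₂ *ᵥ Pi.single j 1)).mpr ⟨_, rfl⟩) i
    rw [mulVec_mulVec] at h
    simpa [Matrix.mulVec_single] using h
  have hUX : U₂ᵀ * X = 0 := by
    have := congrArg transpose hXU
    simpa using this
  have hUP : U₂ᵀ * P₁ = 0 := by
    have : U₂ᵀ * P₁ = U₂ᵀ * X * B * Xᵀ := by
      rw [hP₁]; simp only [Matrix.mul_assoc]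
    rw [this, hUX, Matrix.zero_mul, Matrix.zero_mul]
  -- projection decomposition
  have hQ : ∀ w : Fin m → ℝ, U₂ *ᵥ (U₂ᵀ *ᵥ w) = w - P₁ *ᵥ w := by
    intro w
    have hker0 : Xᵀ *ᵥ (w - P₁ *ᵥ w) = 0 := by
      rw [mulVec_sub, mulVec_mulVec, hXtP, sub_self]
    obtain ⟨c, hc⟩ := (hker _).mp hker0
    have hwsum : w = P₁ *ᵥ w + U₂ *ᵥ c := by
      rw [← hc]; abel
    have hUw : U₂ᵀ *ᵥ w = c := by
      calc U₂ᵀ *ᵥ w = U₂ᵀ *ᵥ (P₁ *ᵥ w + U₂ *ᵥ c) := by rw [← hwsum]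
        _ = (U₂ᵀ * P₁) *ᵥ w + (U₂ᵀ * U₂) *ᵥ c := by
            simp only [mulVec_add, mulVec_mulVec]
        _ = c := by rw [hUP, hU₂, zero_mulVec, one_mulVec, zero_add]
    rw [hUw, ← hc]
  -- key identity
  have key : ∀ θ γ, ∑ i, (Y i - X.mulVec θ i - γ i) ^ 2
      = ∑ i, (X.mulVec θ i - P₁.mulVec (Y - γ) i) ^ 2
        + ∑ j, (U₂ᵀ.mulVec Y j - U₂ᵀ.mulVec γ j) ^ 2 := by
    intro θ γ
    set w : Fin m → ℝ := Y - γ with hw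
    set u : Fin m → ℝ := X *ᵥ θ - P₁ *ᵥ w with hu
    set q : Fin k → ℝ := U₂ᵀ *ᵥ w with hq
    have e1 : (fun i => Y i - X.mulVec θ i - γ i) = U₂ *ᵥ q - u := by
      funext i
      rw [hq, hQ w]
      simp [hu, hw]
      ring
    have e2 : (fun j => U₂ᵀ.mulVec Y j - U₂ᵀ.mulVec γ j) = q := by
      funext j
      simp [hq, hw, mulVec_sub]
    have e3 : (fun i => X.mulVec θ i - P₁.mulVec w i) = u := by
      funext i
      simp [hu]
    have hU2u : U₂ᵀ *ᵥ u = 0 := by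
      rw [hu, mulVec_sub, mulVec_mulVec, mulVec_mulVec, hUX, hUP,
        zero_mulVec, zero_mulVec, sub_self]
    have ho : u ⬝ᵥ (U₂ *ᵥ q) = 0 := by
      rw [dotProduct_mulVec, ← mulVec_transpose, hU2u, zero_dotProduct]
    have hqq : (U₂ *ᵥ q) ⬝ᵥ (U₂ *ᵥ q) = q ⬝ᵥ q := by
      rw [dotProduct_mulVec, ← mulVec_transpose, mulVec_mulVec, hU₂, one_mulVec]
    calc ∑ i, (Y i - X.mulVec θ i - γ i) ^ 2
        = (U₂ *ᵥ q - u) ⬝ᵥ (U₂ *ᵥ q - u) := by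
          rw [← sum_sq_eq_dot]
          exact Finset.sum_congr rfl fun i _ => by rw [congrFun e1 i]
      _ = u ⬝ᵥ u + q ⬝ᵥ q := by
          simp only [sub_dotProduct, dotProduct_sub]
          rw [hqq, dotProduct_comm (U₂ *ᵥ q) u, ho]
          ring
      _ = ∑ i, (X.mulVec θ i - P₁.mulVec w i) ^ 2
          + ∑ j, (U₂ᵀ.mulVec Y j - U₂ᵀ.mulVec γ j) ^ 2 := by
          rw [sum_sq_eq_dot (fun i => X.mulVec θ i - P₁.mulVec w i),
            sum_sq_eq_dot (fun j => U₂ᵀ.mulVec Y j - U₂ᵀ.mulVec γ j), e3, e2]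
  -- F in split form
  have hFg : ∀ θ γ, F θ γ
      = (1 / 2) * ∑ i, (X.mulVec θ i - P₁.mulVec (Y - γ) i) ^ 2 + g γ := by
    intro θ γ
    rw [hF, hg, key]
    ring
  have hSnn : ∀ (θ : Fin n → ℝ) (γ : Fin m → ℝ),
      (0:ℝ) ≤ ∑ i, (X.mulVec θ i - P₁.mulVec (Y - γ) i) ^ 2 :=
    fun θ γ => Finset.sum_nonneg fun i _ => sq_nonneg _
  have hSzero : ∀ γ : Fin m → ℝ,
      ∑ i, (X.mulVec (B *ᵥ (Xᵀ *ᵥ (Y - γ))) i - P₁.mulVec (Y - γ) i) ^ 2 = 0 := by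
    intro γ
    have hx : X *ᵥ (B *ᵥ (Xᵀ *ᵥ (Y - γ))) = P₁ *ᵥ (Y - γ) := by
      rw [mulVec_mulVec, mulVec_mulVec, hP₁]
    rw [hx]
    simp
  constructor
  · intro h
    have hθ : ∀ θ : Fin n → ℝ,
        ∑ i, (X.mulVec θhat i - P₁.mulVec (Y - γhat) i) ^ 2 ≤
          ∑ i, (X.mulVec θ i - P₁.mulVec (Y - γhat) i) ^ 2 := by
      intro θ
      have hh := h θ γhat
      rw [hFg, hFg] at hh
      linarith
    refine ⟨?_, hθ⟩
    intro γ
    have h0 : ∑ i, (X.mulVec θhat i - P₁.mulVec (Y - γhat) i) ^ 2 = 0 := by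
      have := hθ (B *ᵥ (Xᵀ *ᵥ (Y - γhat)))
      rw [hSzero γhat] at this
      exact le_antisymm this (hSnn _ _)
    have hh := h (B *ᵥ (Xᵀ *ᵥ (Y - γ))) γ
    rw [hFg, hFg, h0, hSzero γ] at hh
    linarith
  · rintro ⟨hg1, hθ⟩ θ γ
    have h0 : ∑ i, (X.mulVec θhat i - P₁.mulVec (Y - γhat) i) ^ 2 = 0 := by
      have := hθ (B *ᵥ (Xᵀ *ᵥ (Y - γhat)))
      rw [hSzero γhat] at this
      exact le_antisymm this (hSnn _ _)
    rw [hFg, hFg, h0]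
    have := hg1 γ
    have := hSnn θ γ
    linarith
end

section
/- Consider the Linearized Bregman iteration restricted to a support set S: p^{k+1} + γ^{k+1}/κ - (p^k + γ^k/κ) = A(γ̃ - γ^k)Δt with p^k ∈ ∂‖γ^k‖₁, where A = Ψ_SᵀΨ_S is symmetric positive semidefinite and h = κΔt satisfies h‖A‖ < 2. Then ‖Ψ_S(γ̃ - γ^{k+1})‖₂ ≤ ‖Ψ_S(γ̃ - γ^k)‖₂ for all k, i.e., the residual norm is monotonically non-increasing along the iteration. -/
open Matrix Finset

/-- `p` belongs to the subdifferential of the ℓ¹-norm at `γ`. -/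
def IsL1Subgradient {s : ℕ} (γ p : Fin s → ℝ) : Prop :=
  ∀ i, (γ i ≠ 0 → p i = Real.sign (γ i)) ∧ |p i| ≤ 1

/-!
Write `r = γ̃ - γᵏ`, `u = γᵏ⁺¹ - γᵏ` and `A = Ψᵀ Ψ`. Pairing the update with `u` and using
monotonicity of `∂‖·‖₁`, i.e. `⟨u, pᵏ⁺¹ - pᵏ⟩ ≥ 0`, gives `‖u‖² ≤ h ⟨u, A r⟩`. Together with
`⟨u, A u⟩ ≤ ‖A‖ ‖u‖²` and `h ‖A‖ < 2` this yields `⟨u, A u⟩ ≤ 2 ⟨u, A r⟩`, which is exactly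
`‖Ψ (r - u)‖² ≤ ‖Ψ r‖²`.
-/

namespace IsL1Subgradient

variable {s : ℕ} {γ p : Fin s → ℝ}

theorem mul_self_eq_abs (hp : IsL1Subgradient γ p) (i : Fin s) : p i * γ i = |γ i| := by
  rcases lt_trichotomy (γ i) 0 with hneg | hzero | hpos
  · rw [(hp i).1 hneg.ne, Real.sign_of_neg hneg, abs_of_neg hneg, neg_one_mul]
  · simp [hzero]
  · rw [(hp i).1 hpos.ne', Real.sign_of_pos hpos, abs_of_pos hpos, one_mul]

theorem mul_le_abs (hp : IsL1Subgradient γ p) (i : Fin s) (x : ℝ) : p i * x ≤ |x| :=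
  calc p i * x ≤ |p i| * |x| := by rw [← abs_mul]; exact le_abs_self _
    _ ≤ |x| := mul_le_of_le_one_left (abs_nonneg x) (hp i).2

theorem dotProduct_sub_nonneg {δ q : Fin s → ℝ} (hp : IsL1Subgradient γ p)
    (hq : IsL1Subgradient δ q) : 0 ≤ (δ - γ) ⬝ᵥ (q - p) := by
  refine Finset.sum_nonneg fun i _ => ?_
  have hexpand : (δ - γ) i * (q - p) i = q i * δ i - p i * δ i - q i * γ i + p i * γ i := by
    simp only [Pi.sub_apply]; ring
  rw [hexpand, hq.mul_self_eq_abs, hp.mul_self_eq_abs]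
  linarith [hp.mul_le_abs i (δ i), hq.mul_le_abs i (γ i)]

end IsL1Subgradient

theorem dotProduct_mulVec_self_le_opNorm {n : Type*} [Fintype n] [DecidableEq n]
    (A : Matrix n n ℝ) (u : n → ℝ) :
    u ⬝ᵥ A *ᵥ u ≤ ‖toEuclideanCLM (𝕜 := ℝ) A‖ * (u ⬝ᵥ u) := by
  set x : EuclideanSpace ℝ n := WithLp.toLp 2 u
  have hx : ‖x‖ ^ 2 = u ⬝ᵥ u := by
    rw [EuclideanSpace.norm_sq_eq]; simp [x, dotProduct, sq]
  calc u ⬝ᵥ A *ᵥ u = inner ℝ x (toEuclideanCLM (𝕜 := ℝ) A x) := (inner_toEuclideanCLM A x x).symm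
    _ ≤ ‖x‖ * ‖toEuclideanCLM (𝕜 := ℝ) A x‖ := real_inner_le_norm _ _
    _ ≤ ‖x‖ * (‖toEuclideanCLM (𝕜 := ℝ) A‖ * ‖x‖) := by
      gcongr; exact ContinuousLinearMap.le_opNorm _ _
    _ = ‖toEuclideanCLM (𝕜 := ℝ) A‖ * (u ⬝ᵥ u) := by rw [← hx]; ring

theorem dotProduct_transpose_mul_mulVec {R m n : Type*} [CommSemiring R] [Fintype m] [Fintype n]
    (Ψ : Matrix m n R) (v w : n → R) : v ⬝ᵥ (Ψᵀ * Ψ) *ᵥ w = Ψ *ᵥ v ⬝ᵥ Ψ *ᵥ w := by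
  rw [← mulVec_mulVec, dotProduct_mulVec, vecMul_transpose]

theorem sub_dotProduct_sub_self_le {R n : Type*} [CommRing R] [PartialOrder R]
    [IsOrderedRing R] [Fintype n] {a b : n → R} (h : b ⬝ᵥ b ≤ 2 * (b ⬝ᵥ a)) :
    (a - b) ⬝ᵥ (a - b) ≤ a ⬝ᵥ a := by
  have hexpand : (a - b) ⬝ᵥ (a - b) = a ⬝ᵥ a - 2 * (b ⬝ᵥ a) + b ⬝ᵥ b := by
    simp only [sub_dotProduct, dotProduct_sub, dotProduct_comm a b]; ring
  rw [hexpand]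
  linear_combination h

theorem lbi_step_residual_le {l s : ℕ} (Ψ : Matrix (Fin l) (Fin s) ℝ) (γtil : Fin s → ℝ)
    {κ Δt : ℝ} (hκ : 0 < κ) (hΔt : 0 < Δt)
    (hnorm : κ * Δt * ‖toEuclideanCLM (𝕜 := ℝ) (Ψᵀ * Ψ)‖ < 2)
    {γ γ' p p' : Fin s → ℝ} (hp : IsL1Subgradient γ p) (hp' : IsL1Subgradient γ' p')
    (hupdate : (p' + κ⁻¹ • γ') - (p + κ⁻¹ • γ) = Δt • (Ψᵀ * Ψ) *ᵥ (γtil - γ)) :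
    Ψ *ᵥ (γtil - γ') ⬝ᵥ Ψ *ᵥ (γtil - γ') ≤ Ψ *ᵥ (γtil - γ) ⬝ᵥ Ψ *ᵥ (γtil - γ) := by
  set A := Ψᵀ * Ψ
  set N := ‖toEuclideanCLM (𝕜 := ℝ) A‖
  set r := γtil - γ
  set u := γ' - γ
  have hmono : 0 ≤ u ⬝ᵥ (p' - p) := hp.dotProduct_sub_nonneg hp'
  have hstep : (p' - p) + κ⁻¹ • u = Δt • A *ᵥ r := by rw [← hupdate]; module
  have hpaired : u ⬝ᵥ (p' - p) + κ⁻¹ * (u ⬝ᵥ u) = Δt * (u ⬝ᵥ A *ᵥ r) := by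
    simpa only [dotProduct_add, dotProduct_smul, smul_eq_mul] using congrArg (u ⬝ᵥ ·) hstep
  have hdescent : u ⬝ᵥ u ≤ κ * Δt * (u ⬝ᵥ A *ᵥ r) := by
    have : κ⁻¹ * (u ⬝ᵥ u) ≤ Δt * (u ⬝ᵥ A *ᵥ r) := by linarith
    rwa [inv_mul_le_iff₀ hκ, ← mul_assoc] at this
  have huu : 0 ≤ u ⬝ᵥ u := Finset.sum_nonneg fun i _ => mul_self_nonneg (u i)
  have hcross : 0 ≤ u ⬝ᵥ A *ᵥ r :=
    nonneg_of_mul_nonneg_right (huu.trans hdescent) (mul_pos hκ hΔt)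
  have hquad : u ⬝ᵥ A *ᵥ u ≤ 2 * (u ⬝ᵥ A *ᵥ r) :=
    calc u ⬝ᵥ A *ᵥ u ≤ N * (u ⬝ᵥ u) := dotProduct_mulVec_self_le_opNorm A u
      _ ≤ N * (κ * Δt * (u ⬝ᵥ A *ᵥ r)) := mul_le_mul_of_nonneg_left hdescent (norm_nonneg _)
      _ = κ * Δt * N * (u ⬝ᵥ A *ᵥ r) := by ring
      _ ≤ 2 * (u ⬝ᵥ A *ᵥ r) := mul_le_mul_of_nonneg_right hnorm.le hcross
  rw [← sub_sub_sub_cancel_right γtil γ' γ, mulVec_sub]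
  apply sub_dotProduct_sub_self_le
  simpa only [A, dotProduct_transpose_mul_mulVec] using hquad

theorem lbi_residual_monotone
    {l s : ℕ} (Ψ : Matrix (Fin l) (Fin s) ℝ) (γtil : Fin s → ℝ)
    (κ Δt h : ℝ) (hκ : 0 < κ) (hΔt : 0 < Δt) (hh : h = κ * Δt)
    (hnorm : h * ‖(Matrix.toEuclideanCLM (𝕜 := ℝ)) (Ψᵀ * Ψ)‖ < 2)
    (γ p : ℕ → Fin s → ℝ)
    (hsub : ∀ k, IsL1Subgradient (γ k) (p k))
    (hupdate : ∀ k,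
      (p (k + 1) + κ⁻¹ • γ (k + 1)) - (p k + κ⁻¹ • γ k) =
        Δt • (Ψᵀ * Ψ).mulVec (γtil - γ k)) :
    ∀ k, ∑ i, (Ψ.mulVec (γtil - γ (k + 1)) i) ^ 2 ≤
      ∑ i, (Ψ.mulVec (γtil - γ k) i) ^ 2 := by
  subst hh
  intro k
  simpa only [dotProduct, sq] using
    lbi_step_residual_le Ψ γtil hκ hΔt hnorm (hsub k) (hsub (k + 1)) (hupdate k)
end

section
/- Under the same setting, the Bregman-type quantity Φ_k = ‖γ̃‖₁ - ‖γ^k‖₁ - ⟨p^k, γ̃ - γ^k⟩ + ‖γ̃ - γ^k‖₂²/(2κ) satisfies Φ_{k+1} - Φ_k ≤ -Δt·(1 - h‖Ψ_SᵀΨ_S‖/2)·‖Ψ_S(γ̃ - γ^k)‖₂². -/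
open Matrix Finset

section
open scoped Matrix.Norms.L2Operator

lemma lbi_euc_norm_sq {m : ℕ} (y : Fin m → ℝ) :
    ‖(EuclideanSpace.equiv (Fin m) ℝ).symm y‖^2 = ∑ i, y i^2 := by
  rw [EuclideanSpace.norm_eq, Real.sq_sqrt (by positivity)]
  simp [sq_abs]

lemma lbi_aux_opnorm {l s : ℕ} (Ψ : Matrix (Fin l) (Fin s) ℝ) (x : Fin s → ℝ) :
    ∑ i, ((Ψᵀ * Ψ).mulVec x i)^2 ≤
      ‖(Matrix.toEuclideanCLM (𝕜 := ℝ)) (Ψᵀ * Ψ)‖ * ∑ i, (Ψ.mulVec x i)^2 := by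
  have h2 : Ψᵀ = Ψᴴ := by ext i j; simp [Matrix.conjTranspose_apply]
  have hN : ‖(Matrix.toEuclideanCLM (𝕜 := ℝ)) (Ψᵀ * Ψ)‖ = ‖Ψ‖ * ‖Ψ‖ := by
    have h1 : (Matrix.toEuclideanCLM (𝕜 := ℝ)) (Ψᵀ * Ψ) =
        (Matrix.toEuclideanLin.trans LinearMap.toContinuousLinearMap) (Ψᵀ * Ψ) := by
      apply ContinuousLinearMap.coe_injective; rfl
    rw [h1, ← Matrix.l2_opNorm_def, h2]
    exact Matrix.l2_opNorm_conjTranspose_mul_self Ψ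
  have hT : ‖Ψᵀ‖ = ‖Ψ‖ := by rw [h2]; exact Matrix.l2_opNorm_conjTranspose Ψ
  have key : ‖(EuclideanSpace.equiv (Fin s) ℝ).symm ((Ψᵀ * Ψ) *ᵥ x)‖ ≤
      ‖Ψ‖ * ‖(EuclideanSpace.equiv (Fin l) ℝ).symm (Ψ *ᵥ x)‖ := by
    rw [← Matrix.mulVec_mulVec, ← hT]
    exact Matrix.l2_opNorm_mulVec Ψᵀ ((EuclideanSpace.equiv (Fin l) ℝ).symm (Ψ *ᵥ x))
  have h3 := mul_self_le_mul_self (norm_nonneg _) key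
  rw [← sq, ← sq] at h3
  rw [lbi_euc_norm_sq, mul_pow, lbi_euc_norm_sq] at h3
  rw [hN]
  calc ∑ i, ((Ψᵀ * Ψ).mulVec x i)^2 ≤ ‖Ψ‖^2 * ∑ i, (Ψ.mulVec x i)^2 := h3
    _ = ‖Ψ‖ * ‖Ψ‖ * ∑ i, (Ψ.mulVec x i)^2 := by ring

end

lemma lbi_pointwise_ineq (κ Δt t x y P Q a : ℝ) (hκ : 0 < κ)
    (hPx : P * x = |x|) (hQy : Q * y = |y|) (hPy : P * y ≤ |y|)
    (hupd : Q + κ⁻¹ * y - (P + κ⁻¹ * x) = Δt * a) :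
    (|t| - |y| - Q * (t - y) + (t - y)^2/(2*κ)) -
    (|t| - |x| - P * (t - x) + (t - x)^2/(2*κ)) ≤
      -Δt * ((t - x) * a) + κ * Δt^2/2 * a^2 := by
  have hκ' : κ ≠ 0 := ne_of_gt hκ
  have hQ : Q = P + Δt * a - κ⁻¹ * y + κ⁻¹ * x := by linarith
  rw [← hPx, ← hQy]
  have key : (-Δt * ((t - x) * a) + κ * Δt^2/2 * a^2) -
      ((|t| - Q * y - Q * (t - y) + (t - y)^2/(2*κ)) -
       (|t| - P * x - P * (t - x) + (t - x)^2/(2*κ)))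
      = (Q * y - P * y) + κ/2*(Q - P)^2 := by
    rw [hQ]; field_simp; ring
  have h1 : 0 ≤ Q * y - P * y := by rw [hQy]; linarith
  have h2 : 0 ≤ κ/2*(Q - P)^2 := by positivity
  linarith [key]

theorem lbi_bregman_decrease
    {l s : ℕ} (Ψ : Matrix (Fin l) (Fin s) ℝ) (γtil : Fin s → ℝ)
    (κ Δt h : ℝ) (hκ : 0 < κ) (hΔt : 0 < Δt) (hh : h = κ * Δt)
    (γ p : ℕ → Fin s → ℝ)
    (hsub : ∀ k, IsL1Subgradient (γ k) (p k))
    (hupdate : ∀ k,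
      (p (k + 1) + κ⁻¹ • γ (k + 1)) - (p k + κ⁻¹ • γ k) =
        Δt • (Ψᵀ * Ψ).mulVec (γtil - γ k))
    (Φ : ℕ → ℝ)
    (hΦ : ∀ k, Φ k = ∑ i, |γtil i| - ∑ i, |γ k i| -
      ∑ i, p k i * (γtil i - γ k i) + (∑ i, (γtil i - γ k i) ^ 2) / (2 * κ)) :
    ∀ k, Φ (k + 1) - Φ k ≤
      -Δt * (1 - h * ‖(Matrix.toEuclideanCLM (𝕜 := ℝ)) (Ψᵀ * Ψ)‖ / 2) *
        ∑ i, (Ψ.mulVec (γtil - γ k) i) ^ 2 := by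
  intro k
  set N := ‖(Matrix.toEuclideanCLM (𝕜 := ℝ)) (Ψᵀ * Ψ)‖ with hN
  have hN0 : 0 ≤ N := norm_nonneg _
  set a := (Ψᵀ * Ψ).mulVec (γtil - γ k) with ha
  set w := Ψ.mulVec (γtil - γ k) with hw
  -- pointwise facts
  have hpx : ∀ j i, p j i * γ j i = |γ j i| := by
    intro j i
    rcases lt_trichotomy (γ j i) 0 with hl | he | hg
    · rw [(hsub j i).1 (ne_of_lt hl), Real.sign_of_neg hl, abs_of_neg hl]; ring
    · simp [he]
    · rw [(hsub j i).1 (ne_of_gt hg), Real.sign_of_pos hg, abs_of_pos hg]; ring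
  have hpy : ∀ i, p k i * γ (k+1) i ≤ |γ (k+1) i| :=
    fun i => calc p k i * γ (k+1) i ≤ |p k i * γ (k+1) i| := le_abs_self _
      _ = |p k i| * |γ (k+1) i| := abs_mul _ _
      _ ≤ 1 * |γ (k+1) i| := mul_le_mul_of_nonneg_right (hsub k i).2 (abs_nonneg _)
      _ = |γ (k+1) i| := one_mul _
  have hupd : ∀ i, p (k+1) i + κ⁻¹ * γ (k+1) i - (p k i + κ⁻¹ * γ k i) = Δt * a i := by
    intro i
    have := congrFun (hupdate k) i
    simpa [ha] using this
  have expand : ∀ j, Φ j = ∑ i,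
      (|γtil i| - |γ j i| - p j i * (γtil i - γ j i) + (γtil i - γ j i)^2/(2*κ)) := by
    intro j
    rw [hΦ j]
    simp only [Finset.sum_add_distrib, Finset.sum_sub_distrib, Finset.sum_div]
  have hB : ∑ i, (γtil i - γ k i) * a i = ∑ i, w i ^ 2 := by
    have h1 : (γtil - γ k) ⬝ᵥ ((Ψᵀ * Ψ) *ᵥ (γtil - γ k)) =
        (Ψ *ᵥ (γtil - γ k)) ⬝ᵥ (Ψ *ᵥ (γtil - γ k)) := by
      rw [← Matrix.mulVec_mulVec, Matrix.dotProduct_mulVec, Matrix.vecMul_transpose]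
    simpa [dotProduct, sq, ha, hw] using h1
  have hC : ∑ i, a i ^ 2 ≤ N * ∑ i, w i ^ 2 := lbi_aux_opnorm Ψ (γtil - γ k)
  calc Φ (k + 1) - Φ k
      = ∑ i, ((|γtil i| - |γ (k+1) i| - p (k+1) i * (γtil i - γ (k+1) i)
            + (γtil i - γ (k+1) i)^2/(2*κ))
          - (|γtil i| - |γ k i| - p k i * (γtil i - γ k i)
            + (γtil i - γ k i)^2/(2*κ))) := by
        rw [expand, expand, Finset.sum_sub_distrib]
    _ ≤ ∑ i, (-Δt * ((γtil i - γ k i) * a i) + κ * Δt^2/2 * a i^2) := by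
        refine Finset.sum_le_sum fun i _ => ?_
        exact lbi_pointwise_ineq κ Δt (γtil i) (γ k i) (γ (k+1) i) (p k i) (p (k+1) i)
          (a i) hκ (hpx k i) (hpx (k+1) i) (hpy i) (hupd i)
    _ = -Δt * ∑ i, (γtil i - γ k i) * a i + κ * Δt^2/2 * ∑ i, a i^2 := by
        rw [Finset.sum_add_distrib, ← Finset.mul_sum, ← Finset.mul_sum]
    _ ≤ -Δt * ∑ i, w i ^ 2 + κ * Δt^2/2 * (N * ∑ i, w i ^ 2) := by
        rw [hB]
        have : κ * Δt^2/2 * ∑ i, a i^2 ≤ κ * Δt^2/2 * (N * ∑ i, w i ^ 2) :=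
          mul_le_mul_of_nonneg_left hC (by positivity)
        linarith
    _ = -Δt * (1 - h * N / 2) * ∑ i, w i ^ 2 := by rw [hh]; ring
end

section
/- Let γ̃ ∈ ℝˢ with minimal nonzero magnitude γ̃_min = minᵢ |γ̃ᵢ| > 0, let p ∈ [-1,1]ˢ be a subgradient vector for ‖·‖₁ at some point γ, and define Φ = ‖γ̃‖₁ - ‖γ‖₁ - ⟨p, γ̃ - γ⟩ + ‖γ̃ - γ‖₂²/(2κ). Then Φ ≤ F(‖γ̃ - γ‖₂²), where F(x) = x/(2κ) + 0 for 0 ≤ x < γ̃_min², F(x) = x/(2κ) + 2x/γ̃_min for γ̃_min² ≤ x ≤ s·γ̃_min², and F(x) = x/(2κ) + 2√(xs) for x ≥ s·γ̃_min². -/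
open Finset

theorem bregman_bounded_by_F
    {s : ℕ} (γ γtil p : Fin s → ℝ) (κ a : ℝ) (hκ : 0 < κ) (ha : 0 < a)
    -- `a` is the minimal magnitude of the (all nonzero) entries of `γtil`
    (hmin : ∀ i, a ≤ |γtil i|) (hattained : ∃ i, |γtil i| = a)
    (hp : IsL1Subgradient γ p)
    (Φ : ℝ)
    (hΦ : Φ = ∑ i, |γtil i| - ∑ i, |γ i| - ∑ i, p i * (γtil i - γ i) +
      (∑ i, (γtil i - γ i) ^ 2) / (2 * κ))
    (F : ℝ → ℝ)
    (hFdef : ∀ x, F x = x / (2 * κ) +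
      (if x < a ^ 2 then 0
       else if x ≤ s * a ^ 2 then 2 * x / a
       else 2 * Real.sqrt (x * s))) :
    Φ ≤ F (∑ i, (γtil i - γ i) ^ 2) := by
  classical
  set x := ∑ i, (γtil i - γ i) ^ 2 with hx
  have hx0 : 0 ≤ x := Finset.sum_nonneg (fun i _ => sq_nonneg _)
  -- p i * γ i = |γ i|
  have hpγ : ∀ i, p i * γ i = |γ i| := by
    intro i
    rcases lt_trichotomy (γ i) 0 with h | h | h
    · rw [(hp i).1 h.ne, Real.sign_of_neg h, abs_of_neg h]; ring
    · simp [h]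
    · rw [(hp i).1 h.ne', Real.sign_of_pos h, abs_of_pos h]; ring
  -- key: if deviation small, term vanishes
  have hkey : ∀ i, (γtil i - γ i) ^ 2 < (γtil i) ^ 2 → p i * γtil i = |γtil i| := by
    intro i h
    have hγne : γ i ≠ 0 := by
      intro h0; rw [h0] at h; simp at h
    rcases lt_trichotomy (γ i) 0 with hg | hg | hg
    · have hγt : γtil i < 0 := by nlinarith
      rw [(hp i).1 hγne, Real.sign_of_neg hg, abs_of_neg hγt]; ring
    · exact absurd hg hγne
    · have hγt : 0 < γtil i := by nlinarith
      rw [(hp i).1 hγne, Real.sign_of_pos hg, abs_of_pos hγt]; ring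
  have habs : ∀ i, p i * γtil i ≤ |γtil i| ∧ -|γtil i| ≤ p i * γtil i := by
    intro i
    have h1 : |p i * γtil i| ≤ |γtil i| := by
      rw [abs_mul]
      calc |p i| * |γtil i| ≤ 1 * |γtil i| :=
            mul_le_mul_of_nonneg_right (hp i).2 (abs_nonneg _)
        _ = |γtil i| := one_mul _
    exact ⟨(le_abs_self _).trans h1, by
      have := neg_abs_le (p i * γtil i); linarith⟩
  have ht2 : ∀ i, |γtil i| - p i * γtil i ≤ 2 * (γtil i - γ i) ^ 2 / a := by
    intro i
    by_cases h : (γtil i - γ i) ^ 2 < (γtil i) ^ 2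
    · rw [hkey i h]; simp; positivity
    · push_neg at h
      have h1 := (habs i).2
      have h2 := hmin i
      have h3 := sq_abs (γtil i)
      rw [le_div_iff₀ ha]
      nlinarith [abs_nonneg (γtil i)]
  have ht3 : ∀ i, |γtil i| - p i * γtil i ≤ 2 * |γtil i - γ i| := by
    intro i
    by_cases h : (γtil i - γ i) ^ 2 < (γtil i) ^ 2
    · rw [hkey i h]; simp [abs_nonneg]
    · push_neg at h
      have h1 := (habs i).2
      have h3 := sq_abs (γtil i)
      have h4 := sq_abs (γtil i - γ i)
      nlinarith [abs_nonneg (γtil i), abs_nonneg (γtil i - γ i)]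
  have hD : Φ = (∑ i, (|γtil i| - p i * γtil i)) + x / (2 * κ) := by
    rw [hΦ]
    have e1 : ∑ i, p i * (γtil i - γ i) = ∑ i, p i * γtil i - ∑ i, |γ i| := by
      simp only [mul_sub]
      rw [Finset.sum_sub_distrib]
      congr 1
      exact Finset.sum_congr rfl fun i _ => hpγ i
    rw [e1, Finset.sum_sub_distrib]
    ring
  rw [hFdef]
  by_cases h1 : x < a ^ 2
  · rw [if_pos h1]
    have hz : ∀ i ∈ Finset.univ, |γtil i| - p i * γtil i = (0 : ℝ) := by
      intro i _
      have hxi : (γtil i - γ i) ^ 2 ≤ x :=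
        Finset.single_le_sum (f := fun i => (γtil i - γ i) ^ 2)
          (fun i _ => sq_nonneg _) (Finset.mem_univ i)
      have h2 := hmin i
      have h3 := sq_abs (γtil i)
      have : (γtil i - γ i) ^ 2 < (γtil i) ^ 2 := by nlinarith
      rw [hkey i this]; ring
    rw [hD, Finset.sum_congr rfl hz]
    simp
  · push_neg at h1
    rw [if_neg (not_lt.mpr h1)]
    by_cases h2 : x ≤ s * a ^ 2
    · rw [if_pos h2]
      have hle : ∑ i, (|γtil i| - p i * γtil i) ≤ ∑ i, 2 * (γtil i - γ i) ^ 2 / a :=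
        Finset.sum_le_sum fun i _ => ht2 i
      have hs : ∑ i, 2 * (γtil i - γ i) ^ 2 / a = 2 * x / a := by
        rw [← Finset.sum_div, ← Finset.mul_sum]
      rw [hs] at hle
      rw [hD]; linarith
    · rw [if_neg h2]
      have hle : ∑ i, (|γtil i| - p i * γtil i) ≤ ∑ i, 2 * |γtil i - γ i| :=
        Finset.sum_le_sum fun i _ => ht3 i
      have hcs : (∑ i, |γtil i - γ i|) ^ 2 ≤ s * x := by
        have h := sq_sum_le_card_mul_sum_sq (s := (Finset.univ : Finset (Fin s)))
          (f := fun i => |γtil i - γ i|)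
        simpa [sq_abs] using h
      have hnn : 0 ≤ ∑ i, |γtil i - γ i| :=
        Finset.sum_nonneg fun i _ => abs_nonneg _
      have h3 : ∑ i, |γtil i - γ i| ≤ Real.sqrt (x * s) := by
        rw [show x * (s : ℝ) = (s : ℝ) * x by ring]
        exact (Real.le_sqrt hnn (by positivity)).mpr hcs
      rw [hD]
      have : ∑ i, 2 * |γtil i - γ i| = 2 * ∑ i, |γtil i - γ i| := by
        rw [Finset.mul_sum]
      rw [this] at hle
      linarith
end
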